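/- arXiv:1603.02467 — 2 statements merged into one kernel-verified Lean document; each statement's English description precedes it below -/
import Mathlib

section
/- For a reversible 2-structure g = (V, Υ, φ), the associated map δ_g (defined by δ_g(x,y) = φ(x,y)) is a symbolic ultrametric if and only if g is uniformly non-prime. -/
/-- A 2-structure is modeled by a labeling `φ : V → V → Υ`; only values on
distinct pairs are relevant. A *module* of the 2-structure. -/
def IsModule {V Υ : Type*} (φ : V → V → Υ) (M : Set V) : Prop :=
  ∀ x ∈ M, ∀ y ∈ M, ∀ z ∉ M, φ x z = φ y z ∧ φ z x = φ z y

/-- A graph-module of a digraph given by its arc relation `E`. -/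
def IsGraphModule {V : Type*} (E : V → V → Prop) (M : Set V) : Prop :=
  ∀ x ∈ M, ∀ y ∈ M, ∀ z ∉ M, (E x z ↔ E y z) ∧ (E z x ↔ E z y)

/-- Two sets overlap: they intersect and neither contains the other. -/
def Overlap {V : Type*} (A B : Set V) : Prop :=
  (A ∩ B).Nonempty ∧ ¬ A ⊆ B ∧ ¬ B ⊆ A

/-- A (nonempty) module of a 2-structure. -/
def IsModuleNe {V Υ : Type*} (φ : V → V → Υ) (M : Set V) : Prop :=
  M.Nonempty ∧ IsModule φ M

/-- A strong module: a module overlapping no other module. -/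
def IsStrongModule {V Υ : Type*} (φ : V → V → Υ) (M : Set V) : Prop :=
  IsModuleNe φ M ∧ ∀ N : Set V, IsModuleNe φ N → ¬ Overlap M N

/-- The labeling of the reversible refinement `rev(g)`. -/
def revMap {V Υ : Type*} (φ : V → V → Υ) : V → V → Υ × Υ :=
  fun x y => (φ x y, φ y x)

/-- A 2-structure is reversible if equally labeled arcs have equally
labeled reverse arcs. -/
def Reversible {V Υ : Type*} (φ : V → V → Υ) : Prop :=
  ∀ x y a b : V, x ≠ y → a ≠ b → φ x y = φ a b → φ y x = φ b a

/-- The unordered pair of labels on the two arcs between `u` and `v`. -/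
def Dset {V Υ : Type*} (φ : V → V → Υ) (u v : V) : Set Υ :=
  {φ u v, φ v u}

/-- The triangle condition (U2). -/
def CondU2 {V Υ : Type*} (φ : V → V → Υ) : Prop :=
  ∀ x y z : V, x ≠ y → x ≠ z → y ≠ z →
    ({Dset φ x y, Dset φ x z, Dset φ y z} : Set (Set Υ)).ncard ≤ 2

/-- The monochromatic digraph `G_i(g)` with arcs labeled `i`. -/
def Ggraph {V Υ : Type*} (φ : V → V → Υ) (i : Υ) : V → V → Prop :=
  fun x y => x ≠ y ∧ φ x y = i

/-- A relation on `Fin n` given by an explicit arc list. -/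
def relOf {n : ℕ} (L : List (Fin n × Fin n)) : Fin n → Fin n → Prop :=
  fun k l => (k, l) ∈ L

/-- Forbidden digraph `D₃`: arcs (0,1),(1,2) only. -/
def FD3 : Fin 3 → Fin 3 → Prop := relOf [(0,1),(1,2)]
/-- Forbidden digraph `A`: an arc into an endpoint of a symmetric edge. -/
def FA : Fin 3 → Fin 3 → Prop := relOf [(0,1),(1,2),(2,1)]
/-- Forbidden digraph `B`: an arc out of an endpoint of a symmetric edge. -/
def FB : Fin 3 → Fin 3 → Prop := relOf [(0,1),(1,0),(1,2)]
/-- Forbidden digraph `D̄₃`: the complement of `D₃`. -/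
def FD3c : Fin 3 → Fin 3 → Prop := relOf [(1,0),(2,1),(0,2),(2,0)]
/-- Forbidden digraph `C₃`: a directed triangle. -/
def FC3 : Fin 3 → Fin 3 → Prop := relOf [(0,1),(1,2),(2,0)]
/-- Forbidden digraph `N`: arcs (1,0),(1,2),(3,2) only. -/
def FN : Fin 4 → Fin 4 → Prop := relOf [(1,0),(1,2),(3,2)]
/-- Forbidden digraph `N̄`: the complement of `N`. -/
def FNc : Fin 4 → Fin 4 → Prop :=
  relOf [(0,1),(2,1),(2,3),(0,2),(2,0),(0,3),(3,0),(1,3),(3,1)]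
/-- Forbidden digraph `P₄`: a symmetric path on four vertices. -/
def FP4 : Fin 4 → Fin 4 → Prop := relOf [(0,1),(1,0),(1,2),(2,1),(2,3),(3,2)]

/-- `E` contains the pattern `K` as an induced subgraph. -/
def HasInducedCopy {V : Type*} (E : V → V → Prop) {n : ℕ}
    (K : Fin n → Fin n → Prop) : Prop :=
  ∃ ι : Fin n → V, Function.Injective ι ∧
    ∀ k l : Fin n, k ≠ l → (E (ι k) (ι l) ↔ K k l)

/-- A di-cograph: a digraph with none of the eight forbidden induced
subgraphs `D₃, A, B, D̄₃, C₃, N̄, N, P₄`. -/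
def IsDiCograph {V : Type*} (E : V → V → Prop) : Prop :=
  ¬ HasInducedCopy E FD3 ∧ ¬ HasInducedCopy E FA ∧ ¬ HasInducedCopy E FB ∧
  ¬ HasInducedCopy E FD3c ∧ ¬ HasInducedCopy E FC3 ∧
  ¬ HasInducedCopy E FNc ∧ ¬ HasInducedCopy E FN ∧ ¬ HasInducedCopy E FP4

/-- Condition (U1): every monochromatic digraph is a di-cograph. -/
def CondU1 {V Υ : Type*} (φ : V → V → Υ) : Prop :=
  ∀ i : Υ, IsDiCograph (Ggraph φ i)

/-- `δ` is a symbolic ultrametric: (U1) and (U2). -/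
def SymbolicUltrametric {V Υ : Type*} (φ : V → V → Υ) : Prop :=
  CondU1 φ ∧ CondU2 φ

/-- A module of the induced substructure `g[X]`. -/
def IsModuleOn {V Υ : Type*} (φ : V → V → Υ) (X M : Set V) : Prop :=
  M ⊆ X ∧ ∀ x ∈ M, ∀ y ∈ M, ∀ z ∈ X \ M, φ x z = φ y z ∧ φ z x = φ z y

/-- The substructure `g[X]` is prime: all its modules are trivial. -/
def IsPrimeOn {V Υ : Type*} (φ : V → V → Υ) (X : Set V) : Prop :=
  ∀ M : Set V, IsModuleOn φ X M → M = ∅ ∨ (∃ v, M = {v}) ∨ M = X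

/-- Uniformly non-prime: no induced substructure on ≥ 3 vertices is prime. -/
def Unp {V Υ : Type*} (φ : V → V → Υ) : Prop :=
  ∀ X : Set V, 3 ≤ X.ncard → ¬ IsPrimeOn φ X

/-- A (nonempty) graph-module of a digraph. -/
def IsGraphModuleNe {V : Type*} (E : V → V → Prop) (M : Set V) : Prop :=
  M.Nonempty ∧ IsGraphModule E M

/-- A strong graph-module of a digraph. -/
def IsStrongGraphModule {V : Type*} (E : V → V → Prop) (M : Set V) : Prop :=
  IsGraphModuleNe E M ∧ ∀ N : Set V, IsGraphModuleNe E N → ¬ Overlap M N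

/-- The subgraph induced on `M` is (weakly) connected. -/
def ConnectedOn {V : Type*} (E : V → V → Prop) (M : Set V) : Prop :=
  ∀ x ∈ M, ∀ y ∈ M,
    Relation.ReflTransGen (fun a b => a ∈ M ∧ b ∈ M ∧ (E a b ∨ E b a)) x y

/-- `M` is a 1-cluster of (the cotree of) the di-cograph `E`: a strong module
with at least two vertices whose cotree vertex is series or order, i.e. whose
induced subgraph is weakly connected. -/
def IsOneCluster {V : Type*} (E : V → V → Prop) (M : Set V) : Prop :=
  IsStrongGraphModule E M ∧ 2 ≤ M.ncard ∧ ConnectedOn E M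

/-- `C¹(g)`: all 1-clusters of the monochromatic di-cographs together with
all singletons. -/
def OneClusters {V Υ : Type*} (φ : V → V → Υ) : Set (Set V) :=
  {M | (∃ i : Υ, IsOneCluster (Ggraph φ i) M) ∨ ∃ v : V, M = {v}}

/-- `M` is the least common ancestor module of `x` and `y`: the minimal strong
module of `g` containing both. -/
def IsLcaModule {V Υ : Type*} (φ : V → V → Υ) (x y : V) (M : Set V) : Prop :=
  IsStrongModule φ M ∧ x ∈ M ∧ y ∈ M ∧
    ∀ N : Set V, IsStrongModule φ N → x ∈ N → y ∈ N → M ⊆ N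

/-!
A forbidden induced subgraph of some `G_i`, or a triangle carrying three different label
pairs, spans a prime substructure on three or four vertices; this gives one direction.

For the other, call a rank function `r` taking at least two values on `X` a layering with
label `m` if every arc from a lower to a higher layer is labelled `m`. By reversibility the arcs
going down then carry a single label too, so a cut between two layers splits `X` into two
modules, and `X` is not prime once it has three vertices. Under (U1) and (U2) every finite `X`
with at least two vertices has a layering, built by adding one vertex `x` at a time. Call `s`
unlinked if neither arc between `x` and `s` is labelled `m`. By (U2) and the forbidden `D₃`,
unlinked vertices in different layers see `x` alike; the forbidden `D₃`, `C₃`, `N` and `P₄`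
then order the `m`-neighbours of `x` around the unlinked vertices, so that `x` fits into an
existing layer, or into a new layer together with the unlinked vertices, or alone below
everything.
-/

theorem Set.ncard_triple_le_two_iff {α : Type*} {a b c : α} :
    ({a, b, c} : Set α).ncard ≤ 2 ↔ a = b ∨ a = c ∨ b = c := by
  refine ⟨fun h => ?_, fun h => ?_⟩
  · by_contra hne
    simp only [not_or] at hne
    have := Set.ncard_eq_three.mpr ⟨a, b, c, hne.1, hne.2.1, hne.2.2, rfl⟩
    omega
  have hpair : ∀ d e : α, ({d, e} : Set α).ncard ≤ 2 := fun d e =>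
    (Set.ncard_insert_le d {e}).trans (by rw [Set.ncard_singleton])
  rcases h with rfl | rfl | rfl
  · simpa using hpair a c
  · simpa [Set.pair_comm] using hpair a b
  · simpa using hpair a b

theorem Set.Finite.exists_cut {α : Type*} {A B : Set α} (hA : A.Finite) (r : α → ℕ)
    (h : ∀ a ∈ A, ∀ b ∈ B, r a < r b) : ∃ c, (∀ a ∈ A, r a < c) ∧ ∀ b ∈ B, c ≤ r b := by
  classical
  have hex : ∃ c, ∀ a ∈ A, r a < c := by
    obtain ⟨M, hM⟩ := (hA.image r).bddAbove
    exact ⟨M + 1, fun a ha => Nat.lt_succ_of_le (hM ⟨a, ha, rfl⟩)⟩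
  exact ⟨Nat.find hex, Nat.find_spec hex, fun b hb => Nat.find_min' hex fun a ha => h a ha b hb⟩

section PrimeSubstructures

variable {V Υ : Type*} {φ : V → V → Υ}

instance {n : ℕ} (L : List (Fin n × Fin n)) : DecidableRel (relOf L) :=
  fun k l => inferInstanceAs (Decidable ((k, l) ∈ L))

def IsPatternModule {n : ℕ} (K : Fin n → Fin n → Prop) (M : Finset (Fin n)) : Prop :=
  ∀ a ∈ M, ∀ b ∈ M, ∀ z ∉ M, (K a z ↔ K b z) ∧ (K z a ↔ K z b)

instance {n : ℕ} (K : Fin n → Fin n → Prop) [DecidableRel K] :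
    DecidablePred (IsPatternModule K) :=
  fun _ => by unfold IsPatternModule; infer_instance

-- `IsPrimeOn` for the pattern `K`, phrased over `Finset`s so that `decide` can check it
def IsPrimePattern {n : ℕ} (K : Fin n → Fin n → Prop) : Prop :=
  ∀ M, IsPatternModule K M → M.card ≤ 1 ∨ M = Finset.univ

theorem isPrimePattern_FD3 : IsPrimePattern FD3 := by unfold IsPrimePattern FD3; decide
theorem isPrimePattern_FA : IsPrimePattern FA := by unfold IsPrimePattern FA; decide
theorem isPrimePattern_FB : IsPrimePattern FB := by unfold IsPrimePattern FB; decide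
theorem isPrimePattern_FD3c : IsPrimePattern FD3c := by unfold IsPrimePattern FD3c; decide
theorem isPrimePattern_FC3 : IsPrimePattern FC3 := by unfold IsPrimePattern FC3; decide
theorem isPrimePattern_FNc : IsPrimePattern FNc := by unfold IsPrimePattern FNc; decide
theorem isPrimePattern_FN : IsPrimePattern FN := by unfold IsPrimePattern FN; decide
theorem isPrimePattern_FP4 : IsPrimePattern FP4 := by unfold IsPrimePattern FP4; decide

theorem isPrimeOn_range_of_induced {n : ℕ} {K : Fin n → Fin n → Prop} {ι : Fin n → V} {i : Υ}
    (hι : Function.Injective ι) (hcopy : ∀ k l, k ≠ l → (Ggraph φ i (ι k) (ι l) ↔ K k l))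
    (hK : IsPrimePattern K) : IsPrimeOn φ (Set.range ι) := by
  classical
  rintro M ⟨hMX, hmod⟩
  have hN : IsPatternModule K {k | ι k ∈ M} := by
    intro a ha b hb z hz
    simp only [Finset.mem_filter, Finset.mem_univ, true_and] at ha hb hz
    have haz : a ≠ z := by rintro rfl; exact hz ha
    have hbz : b ≠ z := by rintro rfl; exact hz hb
    obtain ⟨h1, h2⟩ := hmod _ ha _ hb _ ⟨⟨z, rfl⟩, hz⟩
    rw [← hcopy a z haz, ← hcopy b z hbz, ← hcopy z a haz.symm, ← hcopy z b hbz.symm]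
    simp only [Ggraph, h1, h2, ne_eq, hι.ne haz, hι.ne hbz, hι.ne haz.symm, hι.ne hbz.symm,
      not_false_eq_true, true_and]
  rcases hK _ hN with hcard | huniv
  · rcases M.eq_empty_or_nonempty with hM | ⟨_, hy⟩
    · exact Or.inl hM
    refine Or.inr (Or.inl ⟨_, Set.eq_singleton_iff_unique_mem.mpr ⟨hy, fun y' hy' => ?_⟩⟩)
    obtain ⟨k, rfl⟩ := hMX hy
    obtain ⟨k', rfl⟩ := hMX hy'
    exact congrArg ι (Finset.card_le_one.mp hcard k' (by simpa) k (by simpa))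
  · refine Or.inr (Or.inr (hMX.antisymm ?_))
    rintro _ ⟨k, rfl⟩
    have hk : k ∈ ({k | ι k ∈ M} : Finset (Fin n)) := by
      rw [huniv]; exact Finset.mem_univ k
    simpa using hk

theorem Unp.not_hasInducedCopy (hU : Unp φ) {n : ℕ} (hn : 3 ≤ n) {K : Fin n → Fin n → Prop}
    (hK : IsPrimePattern K) (i : Υ) : ¬ HasInducedCopy (Ggraph φ i) K := by
  rintro ⟨ι, hι, hcopy⟩
  refine hU _ ?_ (isPrimeOn_range_of_induced hι hcopy hK)
  rwa [Set.ncard_range_of_injective hι, Nat.card_eq_fintype_card, Fintype.card_fin]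

theorem Unp.condU1 (hU : Unp φ) : CondU1 φ := fun i =>
  ⟨hU.not_hasInducedCopy le_rfl isPrimePattern_FD3 i,
    hU.not_hasInducedCopy le_rfl isPrimePattern_FA i,
    hU.not_hasInducedCopy le_rfl isPrimePattern_FB i,
    hU.not_hasInducedCopy le_rfl isPrimePattern_FD3c i,
    hU.not_hasInducedCopy le_rfl isPrimePattern_FC3 i,
    hU.not_hasInducedCopy (by norm_num) isPrimePattern_FNc i,
    hU.not_hasInducedCopy (by norm_num) isPrimePattern_FN i,
    hU.not_hasInducedCopy (by norm_num) isPrimePattern_FP4 i⟩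

theorem dset_comm (a b : V) : Dset φ a b = Dset φ b a := Set.pair_comm _ _

theorem Unp.condU2 (hU : Unp φ) : CondU2 φ := by
  intro x y z hxy hxz hyz
  have hX : ({x, y, z} : Set V).ncard = 3 := Set.ncard_eq_three.mpr ⟨x, y, z, hxy, hxz, hyz, rfl⟩
  have hnp := hU _ hX.ge
  simp only [IsPrimeOn, not_forall, not_or] at hnp
  obtain ⟨M, ⟨hMX, hmod⟩, hM0, hM1, hMX'⟩ := hnp
  obtain ⟨u, hu, v, hv, huv⟩ : M.Nontrivial := by
    by_contra h
    rcases (Set.not_nontrivial_iff.mp h).eq_empty_or_singleton with h | ⟨w, h⟩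
    exacts [hM0 h, hM1 ⟨w, h⟩]
  obtain ⟨w, hwX, hwM⟩ := Set.exists_of_ssubset (hMX.ssubset_of_ne hMX')
  obtain ⟨h1, h2⟩ := hmod u hu v hv w ⟨hwX, hwM⟩
  -- the nontrivial module is a pair `{u, v}` that the third vertex `w` sees alike
  have hD : Dset φ u w = Dset φ v w := by rw [Dset, Dset, h1, h2]
  apply Set.ncard_triple_le_two_iff.mpr
  rcases hMX hu with rfl | rfl | rfl <;> rcases hMX hv with rfl | rfl | rfl <;>
    rcases hwX with rfl | rfl | rfl <;> simp_all [dset_comm]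

end PrimeSubstructures

section ForbiddenSubgraphs

variable {V Υ : Type*} {φ : V → V → Υ} {a b c d : V} {i : Υ}

theorem injective_vec3 (hab : a ≠ b) (hac : a ≠ c) (hbc : b ≠ c) :
    Function.Injective ![a, b, c] := by
  intro k l h
  fin_cases k <;> fin_cases l <;> simp_all [eq_comm]

theorem injective_vec4 (hab : a ≠ b) (hac : a ≠ c) (had : a ≠ d) (hbc : b ≠ c) (hbd : b ≠ d)
    (hcd : c ≠ d) : Function.Injective ![a, b, c, d] := by
  intro k l h
  fin_cases k <;> fin_cases l <;> simp_all [eq_comm]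

namespace CondU1

theorem false_of_D3 (hU1 : CondU1 φ) (hab : a ≠ b) (hac : a ≠ c) (hbc : b ≠ c)
    (eab : φ a b = i) (ebc : φ b c = i)
    (nba : φ b a ≠ i) (nac : φ a c ≠ i) (nca : φ c a ≠ i) (ncb : φ c b ≠ i) : False := by
  refine (hU1 i).1 ⟨![a, b, c], injective_vec3 hab hac hbc, fun k l hkl => ?_⟩
  fin_cases k <;> fin_cases l <;> simp_all [Ggraph, FD3, relOf, eq_comm]

theorem false_of_C3 (hU1 : CondU1 φ) (hab : a ≠ b) (hac : a ≠ c) (hbc : b ≠ c)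
    (eab : φ a b = i) (ebc : φ b c = i) (eca : φ c a = i)
    (nba : φ b a ≠ i) (ncb : φ c b ≠ i) (nac : φ a c ≠ i) : False := by
  refine (hU1 i).2.2.2.2.1 ⟨![a, b, c], injective_vec3 hab hac hbc, fun k l hkl => ?_⟩
  fin_cases k <;> fin_cases l <;> simp_all [Ggraph, FC3, relOf, eq_comm]

theorem false_of_N (hU1 : CondU1 φ) (hab : a ≠ b) (hac : a ≠ c) (had : a ≠ d) (hbc : b ≠ c)
    (hbd : b ≠ d) (hcd : c ≠ d) (eba : φ b a = i) (ebc : φ b c = i) (edc : φ d c = i)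
    (nab : φ a b ≠ i) (nac : φ a c ≠ i) (nad : φ a d ≠ i) (nbd : φ b d ≠ i) (nca : φ c a ≠ i)
    (ncb : φ c b ≠ i) (ncd : φ c d ≠ i) (nda : φ d a ≠ i) (ndb : φ d b ≠ i) : False := by
  refine (hU1 i).2.2.2.2.2.2.1
    ⟨![a, b, c, d], injective_vec4 hab hac had hbc hbd hcd, fun k l hkl => ?_⟩
  fin_cases k <;> fin_cases l <;> simp_all [Ggraph, FN, relOf, eq_comm]

theorem false_of_P4 (hU1 : CondU1 φ) (hab : a ≠ b) (hac : a ≠ c) (had : a ≠ d) (hbc : b ≠ c)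
    (hbd : b ≠ d) (hcd : c ≠ d) (eab : φ a b = i) (eba : φ b a = i) (ebc : φ b c = i)
    (ecb : φ c b = i) (ecd : φ c d = i) (edc : φ d c = i) (nac : φ a c ≠ i) (nca : φ c a ≠ i)
    (nad : φ a d ≠ i) (nda : φ d a ≠ i) (nbd : φ b d ≠ i) (ndb : φ d b ≠ i) : False := by
  refine (hU1 i).2.2.2.2.2.2.2
    ⟨![a, b, c, d], injective_vec4 hab hac had hbc hbd hcd, fun k l hkl => ?_⟩
  fin_cases k <;> fin_cases l <;> simp_all [Ggraph, FP4, relOf, eq_comm]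

end CondU1

end ForbiddenSubgraphs

section Layerings

variable {V Υ : Type*} {φ : V → V → Υ}

def ConverseLabels (φ : V → V → Υ) (m m' : Υ) : Prop :=
  ∀ a b, a ≠ b → (φ a b = m ↔ φ b a = m')

theorem Reversible.converseLabels (hrev : Reversible φ) {a b : V} (hab : a ≠ b) :
    ConverseLabels φ (φ a b) (φ b a) :=
  fun _ _ hcd => ⟨hrev _ _ _ _ hcd hab, hrev _ _ _ _ hcd.symm hab.symm⟩

def Linked (φ : V → V → Υ) (m : Υ) (a b : V) : Prop :=
  φ a b = m ∨ φ b a = m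

theorem linked_comm {m : Υ} {a b : V} : Linked φ m a b ↔ Linked φ m b a := or_comm

theorem mem_dset {m : Υ} {a b : V} : m ∈ Dset φ a b ↔ Linked φ m a b := by
  simp [Dset, Linked, eq_comm]

namespace ConverseLabels

variable {m m' : Υ} {a b c d : V}

theorem eq_or_eq_of_linked (hc : ConverseLabels φ m m') (hab : a ≠ b) (h : Linked φ m a b) :
    φ a b = m ∨ φ a b = m' :=
  h.imp_right (hc b a hab.symm).mp

theorem ne_of_linked_of_not_linked (hc : ConverseLabels φ m m') (hab : a ≠ b)
    (hl : Linked φ m a b) (hcd : c ≠ d) (hn : ¬ Linked φ m c d) : φ a b ≠ φ c d := by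
  intro h
  rcases hc.eq_or_eq_of_linked hab hl with h' | h'
  · exact hn (Or.inl (h ▸ h'))
  · exact hn (Or.inr ((hc d c hcd.symm).mpr (h ▸ h')))

theorem ne_of_not_symm (hc : ConverseLabels φ m m') (hab : a ≠ b) (h1 : φ a b = m)
    (h2 : φ b a ≠ m) : m' ≠ m :=
  fun e => h2 (((hc a b hab).mp h1).trans e)

end ConverseLabels

structure IsLayering (φ : V → V → Υ) (X : Set V) (m : Υ) (r : V → ℕ) : Prop where
  exists_ne : ∃ u ∈ X, ∃ v ∈ X, r u ≠ r v
  map_of_lt : ∀ u ∈ X, ∀ v ∈ X, r u < r v → φ u v = m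

theorem Reversible.not_isPrimeOn_of_forall_eq (hrev : Reversible φ) {X A : Set V} {m : Υ}
    (h3 : 3 ≤ X.ncard) (hAX : A ⊆ X) (hA : A.Nonempty) (hB : (X \ A).Nonempty)
    (hAB : ∀ a ∈ A, ∀ b ∈ X \ A, φ a b = m) : ¬ IsPrimeOn φ X := by
  have hmodA : IsModuleOn φ X A := by
    refine ⟨hAX, fun a ha a' ha' z hz => ?_⟩
    have e := (hAB a ha z hz).trans (hAB a' ha' z hz).symm
    exact ⟨e, hrev a z a' z (ne_of_mem_of_not_mem ha hz.2) (ne_of_mem_of_not_mem ha' hz.2) e⟩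
  have hmodB : IsModuleOn φ X (X \ A) := by
    refine ⟨Set.sdiff_subset, fun b hb b' hb' z hz => ?_⟩
    have hzA : z ∈ A := by_contra fun h => hz.2 ⟨hz.1, h⟩
    have e := (hAB z hzA b hb).trans (hAB z hzA b' hb').symm
    exact ⟨hrev z b z b' (ne_of_mem_of_not_mem hzA hb.2) (ne_of_mem_of_not_mem hzA hb'.2) e, e⟩
  intro hp
  have hsmall : ∀ M, IsModuleOn φ X M → M.Nonempty → (X \ M).Nonempty → M.ncard ≤ 1 := by
    intro M hM hne hne'
    rcases hp M hM with rfl | ⟨v, rfl⟩ | rfl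
    · exact absurd hne Set.not_nonempty_empty
    · exact (Set.ncard_singleton v).le
    · simp at hne'
  have hA1 := hsmall A hmodA hA hB
  have hB1 := hsmall (X \ A) hmodB hB (by rwa [Set.sdiff_sdiff_cancel_left hAX])
  have := Set.ncard_union_le A (X \ A)
  rw [Set.union_sdiff_cancel hAX] at this
  omega

theorem isLayering_insert_of_forall_eq {Y : Set V} {x : V} {p : Υ} (hxY : x ∉ Y)
    (hY : Y.Nonempty) (h : ∀ y ∈ Y, φ x y = p) :
    ∃ r, IsLayering φ (insert x Y) p r := by
  classical
  obtain ⟨y, hy⟩ := hY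
  refine ⟨fun v => if v = x then 0 else 1,
    ⟨⟨x, Set.mem_insert x Y, y, Set.mem_insert_of_mem x hy, ?_⟩, fun u hu v hv huv => ?_⟩⟩
  · simp [ne_of_mem_of_not_mem hy hxY]
  · by_cases hux : u = x <;> by_cases hvx : v = x <;> simp only [hux, hvx, if_true, if_false] at huv
    · omega
    · subst hux
      exact h v ((Set.mem_insert_iff.mp hv).resolve_left hvx)
    all_goals omega

namespace IsLayering

variable {X Y S : Set V} {x s t u v w : V} {m m' : Υ} {r : V → ℕ}

theorem not_isPrimeOn (hL : IsLayering φ X m r) (hrev : Reversible φ) (h3 : 3 ≤ X.ncard) :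
    ¬ IsPrimeOn φ X := by
  have key : ∀ u ∈ X, ∀ v ∈ X, r u < r v → ¬ IsPrimeOn φ X := fun u hu v hv huv =>
    hrev.not_isPrimeOn_of_forall_eq h3 (A := {y ∈ X | r y < r v}) (fun _ hy => hy.1)
      ⟨u, hu, huv⟩ ⟨v, hv, fun h => lt_irrefl _ h.2⟩ fun a ha b hb =>
        hL.map_of_lt a ha.1 b hb.1 (ha.2.trans_le (not_lt.mp fun h => hb.2 ⟨hb.1, h⟩))
  obtain ⟨u, hu, v, hv, huv⟩ := hL.exists_ne
  rcases huv.lt_or_gt with h | h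
  exacts [key u hu v hv h, key v hv u hu h]

theorem linked (hL : IsLayering φ X m r) {a b : V} (ha : a ∈ X) (hb : b ∈ X) (hr : r a ≠ r b) :
    Linked φ m a b := by
  rcases hr.lt_or_gt with h | h
  exacts [Or.inl (hL.map_of_lt a ha b hb h), Or.inr (hL.map_of_lt b hb a ha h)]

theorem exists_converseLabels (hL : IsLayering φ X m r) (hrev : Reversible φ) :
    ∃ m', ConverseLabels φ m m' := by
  obtain ⟨u, hu, v, hv, huv⟩ := hL.exists_ne
  rcases huv.lt_or_gt with h | h
  · exact ⟨_, hL.map_of_lt u hu v hv h ▸ hrev.converseLabels (fun e => huv (congrArg r e))⟩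
  · exact ⟨_, hL.map_of_lt v hv u hu h ▸ hrev.converseLabels (fun e => huv (congrArg r e).symm)⟩

theorem insert_of_cut (hL : IsLayering φ Y m r) (hxY : x ∉ Y) (hw : (Y \ S).Nonempty) (c : ℕ)
    (hlow : ∀ y ∈ Y \ S, r y < c → φ y x = m ∧ ∀ s ∈ S, φ y s = m)
    (hhigh : ∀ y ∈ Y \ S, c ≤ r y → φ x y = m ∧ ∀ s ∈ S, φ s y = m) :
    ∃ r', IsLayering φ (insert x Y) m r' := by
  classical
  refine ⟨fun y => if y = x ∨ y ∈ S then 2 * c else 2 * r y + 1, ?_, ?_⟩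
  · obtain ⟨w, hwY, hwS⟩ := hw
    refine ⟨x, Set.mem_insert x Y, w, Set.mem_insert_of_mem x hwY, ?_⟩
    simp only [true_or, if_true, ne_of_mem_of_not_mem hwY hxY, hwS, or_self, if_false]
    omega
  have hout : ∀ y ∈ insert x Y, ¬ (y = x ∨ y ∈ S) → y ∈ Y \ S := fun y hy h =>
    ⟨(Set.mem_insert_iff.mp hy).resolve_left (fun e => h (Or.inl e)), fun e => h (Or.inr e)⟩
  intro u hu v hv huv
  by_cases pu : u = x ∨ u ∈ S <;> by_cases pv : v = x ∨ v ∈ S <;>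
    simp only [pu, pv, if_true, if_false] at huv
  · omega
  · obtain ⟨hxv, hSv⟩ := hhigh v (hout v hv pv) (by omega)
    rcases pu with rfl | hu
    exacts [hxv, hSv u hu]
  · obtain ⟨hux, huS⟩ := hlow u (hout u hu pu) (by omega)
    rcases pv with rfl | hv
    exacts [hux, huS v hv]
  · exact hL.map_of_lt u (hout u hu pu).1 v (hout v hv pv).1 (by omega)

theorem insert_into_layer (hL : IsLayering φ Y m r) (hxY : x ∉ Y) (c : ℕ)
    (hbelow : ∀ y ∈ Y, r y < c → φ y x = m) (habove : ∀ y ∈ Y, c < r y → φ x y = m) :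
    ∃ r', IsLayering φ (insert x Y) m r' := by
  have hw : (Y \ {y ∈ Y | r y = c}).Nonempty := by
    obtain ⟨u, hu, v, hv, huv⟩ := hL.exists_ne
    by_cases hu' : r u = c
    exacts [⟨v, hv, fun h => huv (hu'.trans h.2.symm)⟩, ⟨u, hu, fun h => hu' h.2⟩]
  refine hL.insert_of_cut hxY hw c (fun y hy hyc => ⟨hbelow y hy.1 hyc, fun s hs => ?_⟩)
    (fun y hy hyc => ?_)
  · exact hL.map_of_lt y hy.1 s hs.1 (hs.2 ▸ hyc)
  · have hyc : c < r y := hyc.lt_of_ne fun h => hy.2 ⟨hy.1, h.symm⟩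
    exact ⟨habove y hy.1 hyc, fun s hs => hL.map_of_lt s hs.1 y hy.1 (hs.2 ▸ hyc)⟩

theorem insert_between (hL : IsLayering φ Y m r) (hY : Y.Finite) (hxY : x ∉ Y)
    (hw : (Y \ S).Nonempty) (hlinked : ∀ y ∈ Y \ S, Linked φ m x y)
    (hlt : ∀ u ∈ Y \ S, ∀ w ∈ Y \ S, φ u x = m → φ x w = m → φ w x ≠ m → r u < r w)
    (hlowS : ∀ w ∈ Y \ S, φ w x = m → ∀ s ∈ S, φ w s = m)
    (hhighS : ∀ w ∈ Y \ S, φ x w = m → φ w x ≠ m → ∀ s ∈ S, φ s w = m) :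
    ∃ r', IsLayering φ (insert x Y) m r' := by
  have hout : ∀ y ∈ Y \ S, φ y x ≠ m → φ x y = m := fun y hy h => (hlinked y hy).resolve_right h
  obtain ⟨c, hA, hB⟩ := (hY.subset fun _ hu => hu.1.1 : {u ∈ Y \ S | φ u x = m}.Finite).exists_cut
    (B := {w ∈ Y \ S | φ w x ≠ m}) r
    fun u hu w hw => hlt u hu.1 w hw.1 hu.2 (hout w hw.1 hw.2) hw.2
  refine hL.insert_of_cut hxY hw c (fun y hy hyc => ?_) (fun y hy hyc => ?_)
  · have hyx : φ y x = m := by_contra fun h => (hB y ⟨hy, h⟩).not_gt hyc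
    exact ⟨hyx, hlowS y hy hyx⟩
  · have hyx : φ y x ≠ m := fun h => (hA y ⟨hy, h⟩).not_ge hyc
    exact ⟨hout y hy hyx, hhighS y hy (hout y hy hyx) hyx⟩

theorem unlinked_labels_eq (hL : IsLayering φ Y m r) (hc : ConverseLabels φ m m')
    (hU1 : CondU1 φ) (hU2 : CondU2 φ) (hxY : x ∉ Y) (hs : s ∈ Y) (ht : t ∈ Y)
    (hxs : ¬ Linked φ m x s) (hxt : ¬ Linked φ m x t) (hst : r s ≠ r t) :
    φ x s = φ x t ∧ φ s x = φ t x := by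
  wlog h : r s < r t generalizing s t
  · obtain ⟨h1, h2⟩ := this ht hs hxt hxs hst.symm (hst.symm.lt_of_le (not_lt.mp h))
    exact ⟨h1.symm, h2.symm⟩
  have hxs' : x ≠ s := (ne_of_mem_of_not_mem hs hxY).symm
  have hxt' : x ≠ t := (ne_of_mem_of_not_mem ht hxY).symm
  have hst' : s ≠ t := fun e => hst (congrArg r e)
  have hlst := hL.linked hs ht hst
  rcases Set.ncard_triple_le_two_iff.mp (hU2 x s t hxs' hxt' hst') with h | h | h
  · rcases Set.pair_eq_pair_iff.mp h with h' | ⟨h1, h2⟩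
    · exact h'
    by_cases hpq : φ x s = φ s x
    · exact ⟨hpq.trans h2, hpq.symm.trans h1⟩
    -- the crossed matching is an induced `D₃`: `t → x → s` in `G (φ x s)`
    exfalso
    exact hU1.false_of_D3 hxt'.symm hst'.symm hxs' h1.symm rfl (h2 ▸ Ne.symm hpq)
      (hc.ne_of_linked_of_not_linked hst'.symm (linked_comm.mp hlst) hxs' hxs)
      (hc.ne_of_linked_of_not_linked hst' hlst hxs' hxs) (Ne.symm hpq)
  · exact absurd (mem_dset.mp (h ▸ mem_dset.mpr hlst)) hxs
  · exact absurd (mem_dset.mp (h ▸ mem_dset.mpr hlst)) hxt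

theorem rank_in_le_rank_out (hL : IsLayering φ Y m r) (hc : ConverseLabels φ m m')
    (hU1 : CondU1 φ) (hxY : x ∉ Y) (hu : u ∈ Y) (hw : w ∈ Y)
    (hux : φ u x = m) (hxw : φ x w = m) (hwx : φ w x ≠ m) : r u ≤ r w := by
  by_contra h
  have hxu' : x ≠ u := (ne_of_mem_of_not_mem hu hxY).symm
  have hxw' : x ≠ w := (ne_of_mem_of_not_mem hw hxY).symm
  have hwu' : w ≠ u := fun e => h (e ▸ le_rfl)
  have hm := hc.ne_of_not_symm hxw' hxw hwx
  have hwu := hL.map_of_lt w hw u hu (not_le.mp h)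
  exact hU1.false_of_C3 hxw' hxu' hwu' hxw hwu hux hwx (((hc w u hwu').mp hwu).trans_ne hm)
    (((hc u x hxu'.symm).mp hux).trans_ne hm)

theorem rank_in_le_rank_unlinked (hL : IsLayering φ Y m r) (hc : ConverseLabels φ m m')
    (hU1 : CondU1 φ) (hxY : x ∉ Y) (hm : m' ≠ m) (hs : s ∈ Y) (hxs : ¬ Linked φ m x s)
    (hu : u ∈ Y) (hux : φ u x = m) : r u ≤ r s := by
  by_contra h
  have hxu' : x ≠ u := (ne_of_mem_of_not_mem hu hxY).symm
  have hxs' : x ≠ s := (ne_of_mem_of_not_mem hs hxY).symm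
  have hsu' : s ≠ u := fun e => h (e ▸ le_rfl)
  have hsu := hL.map_of_lt s hs u hu (not_le.mp h)
  rw [Linked, not_or] at hxs
  exact hU1.false_of_D3 hsu' hxs'.symm hxu'.symm hsu hux (((hc s u hsu').mp hsu).trans_ne hm)
    hxs.2 hxs.1 (((hc u x hxu'.symm).mp hux).trans_ne hm)

theorem rank_unlinked_le_rank_out (hL : IsLayering φ Y m r) (hc : ConverseLabels φ m m')
    (hU1 : CondU1 φ) (hxY : x ∉ Y) (hm : m' ≠ m) (hs : s ∈ Y) (hxs : ¬ Linked φ m x s)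
    (hu : u ∈ Y) (hxu : φ x u = m) : r s ≤ r u := by
  by_contra h
  have hxu' : x ≠ u := (ne_of_mem_of_not_mem hu hxY).symm
  have hxs' : x ≠ s := (ne_of_mem_of_not_mem hs hxY).symm
  have hus' : u ≠ s := fun e => h (e ▸ le_rfl)
  have hus := hL.map_of_lt u hu s hs (not_le.mp h)
  rw [Linked, not_or] at hxs
  exact hU1.false_of_D3 hxu' hxs' hus' hxu hus (((hc x u hxu').mp hxu).trans_ne hm)
    hxs.1 hxs.2 (((hc u s hus').mp hus).trans_ne hm)

theorem linked_of_rank_eq (hL : IsLayering φ Y m r) (hc : ConverseLabels φ m m')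
    (hU1 : CondU1 φ) (hU2 : CondU2 φ) (hxY : x ∉ Y) (hs : s ∈ Y) (hxs : ¬ Linked φ m x s)
    (hv : v ∈ Y) (hvs : r v ≠ r s) (hxv : φ x v = φ x s) (hvx : φ v x = φ s x)
    (hw : w ∈ Y) (hws : r w = r s) (hws' : w ≠ s) (hxw : Linked φ m x w) :
    Linked φ m s w := by
  have hxs' : x ≠ s := (ne_of_mem_of_not_mem hs hxY).symm
  have hxv' : x ≠ v := (ne_of_mem_of_not_mem hv hxY).symm
  have hxw' : x ≠ w := (ne_of_mem_of_not_mem hw hxY).symm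
  have hvs' : v ≠ s := fun e => hvs (congrArg r e)
  have hvw' : v ≠ w := fun e => hvs (e ▸ hws)
  have hvw : r v ≠ r w := hws ▸ hvs
  have hne : ∀ {a b}, a ≠ b → Linked φ m a b → φ a b ≠ φ x s ∧ φ a b ≠ φ s x :=
    fun hab h => ⟨hc.ne_of_linked_of_not_linked hab h hxs' hxs,
      hc.ne_of_linked_of_not_linked hab h hxs'.symm (linked_comm.not.mp hxs)⟩
  have lvs := hL.linked hv hs hvs
  have lvw := hL.linked hv hw hvw
  rcases Set.ncard_triple_le_two_iff.mp (hU2 x s w hxs' hxw' hws'.symm) with h | h | h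
  · exact absurd (mem_dset.mp (h ▸ mem_dset.mpr hxw)) hxs
  · -- together with `v`, the equality `Dset x s = Dset s w` yields an induced `P₄`, `D₃` or `N`
    exfalso
    by_cases hpq : φ x s = φ s x
    · have hsw : φ s w = φ x s ∧ φ w s = φ x s := by
        rcases Set.pair_eq_pair_iff.mp h with ⟨h1, h2⟩ | ⟨h1, h2⟩
        exacts [⟨h1.symm, h2.symm.trans hpq.symm⟩, ⟨h2.symm.trans hpq.symm, h1.symm⟩]
      exact hU1.false_of_P4 hxv'.symm hvs' hvw' hxs' hxw' hws'.symm (hvx.trans hpq.symm) hxv rfl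
        hpq.symm hsw.1 hsw.2 (hne hvs' lvs).1 (hne hvs'.symm (linked_comm.mp lvs)).1
        (hne hvw' lvw).1 (hne hvw'.symm (linked_comm.mp lvw)).1 (hne hxw' hxw).1
        (hne hxw'.symm (linked_comm.mp hxw)).1
    rcases Set.pair_eq_pair_iff.mp h with ⟨h1, h2⟩ | ⟨h1, h2⟩
    · exact hU1.false_of_D3 hxs' hxw' hws'.symm rfl h1.symm (Ne.symm hpq) (hne hxw' hxw).1
        (hne hxw'.symm (linked_comm.mp hxw)).1 (h2 ▸ Ne.symm hpq)
    · exact hU1.false_of_N hxv'.symm hvs' hvw' hxs' hxw' hws'.symm hxv rfl h1.symm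
        (hvx ▸ Ne.symm hpq) (hne hvs' lvs).1 (hne hvw' lvw).1 (hne hxw' hxw).1
        (hne hvs'.symm (linked_comm.mp lvs)).1 (Ne.symm hpq) (h2 ▸ Ne.symm hpq)
        (hne hvw'.symm (linked_comm.mp lvw)).1 (hne hxw'.symm (linked_comm.mp hxw)).1
  · exact mem_dset.mp (h ▸ mem_dset.mpr hxw)

theorem map_in_unlinked_of_rank_eq (hL : IsLayering φ Y m r) (hc : ConverseLabels φ m m')
    (hU1 : CondU1 φ) (hU2 : CondU2 φ) (hxY : x ∉ Y) (hs : s ∈ Y) (hxs : ¬ Linked φ m x s)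
    (hv : v ∈ Y) (hvs : r v ≠ r s) (hxv : φ x v = φ x s) (hvx : φ v x = φ s x)
    (hw : w ∈ Y) (hws : r w = r s) (hws' : w ≠ s) (hwx : φ w x = m) : φ w s = m := by
  have hxw' : x ≠ w := (ne_of_mem_of_not_mem hw hxY).symm
  rcases hL.linked_of_rank_eq hc hU1 hU2 hxY hs hxs hv hvs hxv hvx hw hws hws' (Or.inr hwx)
    with hsw | hwsm
  · by_contra hm
    rw [Linked, not_or] at hxs
    exact hU1.false_of_D3 hws'.symm (ne_of_mem_of_not_mem hs hxY) hxw'.symm hsw hwx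
      hm hxs.2 hxs.1 (((hc w x hxw'.symm).mp hwx).trans_ne (((hc s w hws'.symm).mp hsw) ▸ hm))
  · exact hwsm

theorem map_unlinked_out_of_rank_eq (hL : IsLayering φ Y m r) (hc : ConverseLabels φ m m')
    (hU1 : CondU1 φ) (hU2 : CondU2 φ) (hxY : x ∉ Y) (hs : s ∈ Y) (hxs : ¬ Linked φ m x s)
    (hv : v ∈ Y) (hvs : r v ≠ r s) (hxv : φ x v = φ x s) (hvx : φ v x = φ s x)
    (hw : w ∈ Y) (hws : r w = r s) (hws' : w ≠ s) (hxw : φ x w = m) (hwx : φ w x ≠ m) :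
    φ s w = m := by
  have hxw' : x ≠ w := (ne_of_mem_of_not_mem hw hxY).symm
  rcases hL.linked_of_rank_eq hc hU1 hU2 hxY hs hxs hv hvs hxv hvx hw hws hws' (Or.inl hxw)
    with hsw | hwsm
  · exact hsw
  · by_contra hm
    rw [Linked, not_or] at hxs
    exact hU1.false_of_D3 hxw' (ne_of_mem_of_not_mem hs hxY).symm hws' hxw hwsm hwx hxs.1 hxs.2 hm

theorem exists_insert_of_unlinked_rank_ne (hL : IsLayering φ Y m r)
    (hc : ConverseLabels φ m m') (hU1 : CondU1 φ) (hU2 : CondU2 φ) (hY : Y.Finite) (hxY : x ∉ Y)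
    {s₀ s₁ : V} (hs₀ : s₀ ∈ Y) (hs₁ : s₁ ∈ Y) (hxs₀ : ¬ Linked φ m x s₀)
    (hxs₁ : ¬ Linked φ m x s₁) (hr : r s₀ ≠ r s₁) :
    ∃ m₀ r₀, IsLayering φ (insert x Y) m₀ r₀ := by
  set S := {s ∈ Y | ¬ Linked φ m x s}
  have hlabels : ∀ s ∈ S, φ x s = φ x s₀ ∧ φ s x = φ s₀ x := by
    intro s hs
    by_cases h : r s = r s₀
    · have h1 := hL.unlinked_labels_eq hc hU1 hU2 hxY hs.1 hs₁ hs.2 hxs₁ (h ▸ hr)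
      have h0 := hL.unlinked_labels_eq hc hU1 hU2 hxY hs₀ hs₁ hxs₀ hxs₁ hr
      exact ⟨h1.1.trans h0.1.symm, h1.2.trans h0.2.symm⟩
    · exact hL.unlinked_labels_eq hc hU1 hU2 hxY hs.1 hs₀ hs.2 hxs₀ h
  have htwin : ∀ s ∈ S, ∃ v ∈ Y, r v ≠ r s ∧ φ x v = φ x s ∧ φ v x = φ s x := by
    intro s hs
    by_cases h : r s₀ = r s
    · obtain ⟨h1, h2⟩ := hlabels s₁ ⟨hs₁, hxs₁⟩
      exact ⟨s₁, hs₁, h ▸ hr.symm, h1.trans (hlabels s hs).1.symm, h2.trans (hlabels s hs).2.symm⟩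
    · exact ⟨s₀, hs₀, h, (hlabels s hs).1.symm, (hlabels s hs).2.symm⟩
  by_cases hYS : Y ⊆ S
  · exact ⟨_, isLayering_insert_of_forall_eq hxY ⟨s₀, hs₀⟩ fun y hy => (hlabels y (hYS hy)).1⟩
  obtain ⟨w₀, hw₀⟩ := Set.not_subset.mp hYS
  have hlinked : ∀ y ∈ Y \ S, Linked φ m x y := fun y hy => not_not.mp fun h => hy.2 ⟨hy.1, h⟩
  refine ⟨m, hL.insert_between hY hxY ⟨w₀, hw₀⟩ hlinked ?_ ?_ ?_⟩
  · intro u hu w hw hux hxw hwx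
    have hm := hc.ne_of_not_symm (ne_of_mem_of_not_mem hw.1 hxY).symm hxw hwx
    have := hL.rank_in_le_rank_out hc hU1 hxY hu.1 hw.1 hux hxw hwx
    have := hL.rank_in_le_rank_unlinked hc hU1 hxY hm hs₀ hxs₀ hu.1 hux
    have := hL.rank_in_le_rank_unlinked hc hU1 hxY hm hs₁ hxs₁ hu.1 hux
    have := hL.rank_unlinked_le_rank_out hc hU1 hxY hm hs₀ hxs₀ hw.1 hxw
    have := hL.rank_unlinked_le_rank_out hc hU1 hxY hm hs₁ hxs₁ hw.1 hxw
    -- `s₀` and `s₁` both lie between `u` and `w`, in different layers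
    omega
  · intro w hw hwx s hs
    obtain ⟨v, hv, hvs, hxv, hvx⟩ := htwin s hs
    rcases lt_trichotomy (r w) (r s) with h | h | h
    · exact hL.map_of_lt w hw.1 s hs.1 h
    · exact hL.map_in_unlinked_of_rank_eq hc hU1 hU2 hxY hs.1 hs.2 hv hvs hxv hvx hw.1 h
        (ne_of_mem_of_not_mem hs hw.2).symm hwx
    · by_cases hm : m' = m
      · exact ((hc s w (ne_of_mem_of_not_mem hs hw.2)).mp (hL.map_of_lt s hs.1 w hw.1 h)).trans hm
      · exact absurd (hL.rank_in_le_rank_unlinked hc hU1 hxY hm hs.1 hs.2 hw.1 hwx) (not_le.mpr h)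
  · intro w hw hxw hwx s hs
    obtain ⟨v, hv, hvs, hxv, hvx⟩ := htwin s hs
    have hm := hc.ne_of_not_symm (ne_of_mem_of_not_mem hw.1 hxY).symm hxw hwx
    rcases (hL.rank_unlinked_le_rank_out hc hU1 hxY hm hs.1 hs.2 hw.1 hxw).lt_or_eq with h | h
    · exact hL.map_of_lt s hs.1 w hw.1 h
    · exact hL.map_unlinked_out_of_rank_eq hc hU1 hU2 hxY hs.1 hs.2 hv hvs hxv hvx hw.1 h.symm
        (ne_of_mem_of_not_mem hs hw.2).symm hxw hwx

theorem exists_insert_of_unlinked_rank_eq (hL : IsLayering φ Y m r)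
    (hc : ConverseLabels φ m m') (hU1 : CondU1 φ) (hxY : x ∉ Y) (hs : s ∈ Y)
    (hxs : ¬ Linked φ m x s) (hsame : ∀ t ∈ Y, ¬ Linked φ m x t → r t = r s) :
    ∃ r₀, IsLayering φ (insert x Y) m r₀ := by
  refine hL.insert_into_layer hxY (r s) (fun y hy hlt => ?_) (fun y hy hlt => ?_)
  · rcases not_not.mp fun h => hlt.ne (hsame y hy h) with hxy | hyx
    · by_cases hm : m' = m
      · exact ((hc x y (ne_of_mem_of_not_mem hy hxY).symm).mp hxy).trans hm
      · exact absurd (hL.rank_unlinked_le_rank_out hc hU1 hxY hm hs hxs hy hxy) (not_le.mpr hlt)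
    · exact hyx
  · rcases not_not.mp fun h => hlt.ne' (hsame y hy h) with hxy | hyx
    · exact hxy
    · by_cases hm : m' = m
      · exact ((hc y x (ne_of_mem_of_not_mem hy hxY)).mp hyx).trans hm
      · exact absurd (hL.rank_in_le_rank_unlinked hc hU1 hxY hm hs hxs hy hyx) (not_le.mpr hlt)

theorem exists_insert_of_forall_linked (hL : IsLayering φ Y m r) (hc : ConverseLabels φ m m')
    (hU1 : CondU1 φ) (hY : Y.Finite) (hxY : x ∉ Y) (hlinked : ∀ y ∈ Y, Linked φ m x y) :
    ∃ r₀, IsLayering φ (insert x Y) m r₀ := by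
  by_cases hmix : ∃ u ∈ Y, ∃ w ∈ Y, φ u x = m ∧ φ x w = m ∧ φ w x ≠ m ∧ r u = r w
  · obtain ⟨u, hu, w, hw, hux, hxw, hwx, huw⟩ := hmix
    refine hL.insert_into_layer hxY (r u) (fun y hy hlt => ?_) (fun y hy hlt => ?_)
    · by_contra hyx
      exact (hL.rank_in_le_rank_out hc hU1 hxY hu hy hux ((hlinked y hy).resolve_right hyx)
        hyx).not_gt hlt
    · by_contra hxy
      exact (hL.rank_in_le_rank_out hc hU1 hxY hy hw ((hlinked y hy).resolve_left hxy) hxw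
        hwx).not_gt (huw ▸ hlt)
  obtain ⟨y₀, hy₀, -⟩ := hL.exists_ne
  refine hL.insert_between (S := ∅) hY hxY ⟨y₀, hy₀, id⟩ (fun y hy => hlinked y hy.1)
    (fun u hu w hw hux hxw hwx => ?_) (by simp) (by simp)
  exact (hL.rank_in_le_rank_out hc hU1 hxY hu.1 hw.1 hux hxw hwx).lt_of_ne
    fun e => hmix ⟨u, hu.1, w, hw.1, hux, hxw, hwx, e⟩

theorem exists_insert (hL : IsLayering φ Y m r) (hrev : Reversible φ) (hU1 : CondU1 φ)
    (hU2 : CondU2 φ) (hY : Y.Finite) (hxY : x ∉ Y) :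
    ∃ m₀ r₀, IsLayering φ (insert x Y) m₀ r₀ := by
  obtain ⟨m', hc⟩ := hL.exists_converseLabels hrev
  by_cases hspread : ∃ s₀ ∈ Y, ∃ s₁ ∈ Y, ¬ Linked φ m x s₀ ∧ ¬ Linked φ m x s₁ ∧ r s₀ ≠ r s₁
  · obtain ⟨s₀, hs₀, s₁, hs₁, hxs₀, hxs₁, hr⟩ := hspread
    exact hL.exists_insert_of_unlinked_rank_ne hc hU1 hU2 hY hxY hs₀ hs₁ hxs₀ hxs₁ hr
  by_cases hS : ∃ s ∈ Y, ¬ Linked φ m x s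
  · obtain ⟨s, hs, hxs⟩ := hS
    exact ⟨m, hL.exists_insert_of_unlinked_rank_eq hc hU1 hxY hs hxs
      fun t ht hxt => by_contra fun h => hspread ⟨t, ht, s, hs, hxt, hxs, h⟩⟩
  · exact ⟨m, hL.exists_insert_of_forall_linked hc hU1 hY hxY
      fun y hy => not_not.mp fun h => hS ⟨y, hy, h⟩⟩

end IsLayering

theorem exists_isLayering (hrev : Reversible φ) (hU1 : CondU1 φ) (hU2 : CondU2 φ) {X : Set V}
    (hX : X.Finite) (h2 : 2 ≤ X.ncard) : ∃ m r, IsLayering φ X m r := by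
  induction X, hX using Set.Finite.induction_on with
  | empty => simp at h2
  | @insert x Y hxY hY ih =>
    by_cases hY2 : 2 ≤ Y.ncard
    · obtain ⟨m, r, hL⟩ := ih hY2
      exact hL.exists_insert hrev hU1 hU2 hY hxY
    rw [Set.ncard_insert_of_notMem hxY hY] at h2
    obtain ⟨v, rfl⟩ := Set.ncard_eq_one.mp (by omega : Y.ncard = 1)
    exact ⟨_, isLayering_insert_of_forall_eq hxY (Set.singleton_nonempty v)
      fun y hy => congrArg (φ x) hy⟩

end Layerings

/-- Proposition: a reversible 2-structure is uniformly non-prime iff its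
associated map `δ_g` is a symbolic ultrametric. -/
theorem reversible_symbolicUltrametric_iff_unp {V Υ : Type*} (φ : V → V → Υ)
    (hrev : Reversible φ) :
    SymbolicUltrametric φ ↔ Unp φ := by
  refine ⟨fun ⟨hU1, hU2⟩ X h3 => ?_, fun hU => ⟨hU.condU1, hU.condU2⟩⟩
  obtain ⟨m, r, hL⟩ :=
    exists_isLayering hrev hU1 hU2 (Set.finite_of_ncard_pos (s := X) (by omega)) (by omega)
  exact hL.not_isPrimeOn hrev h3
end

section
/- Let g be a reversible 2-structure such that G_i(g) is a di-cograph for every i ∈ Υ, and suppose g violates the triangle condition (U2). Then the collection C¹(g) of 1-clusters (leaf sets of non-parallel cotree vertices over all cotrees T_i, together with all singletons) is not a hierarchy: it contains two overlapping clusters. -/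
open Relation Set

theorem Relation.ReflTransGen.exists_boundary {α : Type*} {r : α → α → Prop} {a b : α}
    (h : ReflTransGen r a b) (S : Set α) (ha : a ∈ S) (hb : b ∉ S) :
    ∃ p q, ReflTransGen r a p ∧ r p q ∧ p ∈ S ∧ q ∉ S := by
  induction h with
  | refl => exact absurd ha hb
  | @tail c d hac hcd ih =>
    by_cases hc : c ∈ S
    · exact ⟨c, d, hac, hcd, hc, hb⟩
    · exact ih hc

namespace SimpleGraph

variable {V : Type*} (G : SimpleGraph V)

def AdjIn (S : Set V) (a b : V) : Prop := a ∈ S ∧ b ∈ S ∧ G.Adj a b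

instance (S : Set V) : Std.Symm (G.AdjIn S) := ⟨fun _ _ ⟨ha, hb, h⟩ => ⟨hb, ha, h.symm⟩⟩

def ConnectedIn (S : Set V) : Prop := ∀ x ∈ S, ∀ y ∈ S, ReflTransGen (G.AdjIn S) x y

def componentIn (S : Set V) (x : V) : Set V := {y ∈ S | ReflTransGen (G.AdjIn S) x y}

def IsP4Free : Prop :=
  ∀ a b c d, G.Adj a b → G.Adj b c → G.Adj c d → ¬G.Adj a c → ¬G.Adj a d → ¬G.Adj b d → False

variable {G}

theorem mem_componentIn_of_reflTransGen {S : Set V} {x y w : V} (hy : y ∈ G.componentIn S x)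
    (h : ReflTransGen (G.AdjIn S) y w) : w ∈ G.componentIn S x := by
  refine ⟨?_, hy.2.trans h⟩
  induction h with
  | refl => exact hy.1
  | tail _ hst _ => exact hst.2.1

theorem connectedIn_of_subset_componentIn {S : Set V} {x : V} (h : S ⊆ G.componentIn S x) :
    G.ConnectedIn S :=
  fun _ ha _ hb => (_root_.symm (h ha).2).trans (h hb).2

theorem ConnectedIn.exists_adj {S : Set V} (hS : G.ConnectedIn S) {s t : V} (hs : s ∈ S)
    (ht : t ∈ S) (hst : s ≠ t) : ∃ r ∈ S, G.Adj s r := by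
  obtain rfl | ⟨r, ⟨-, hr, hsr⟩, -⟩ := (hS s hs t ht).cases_head
  · exact absurd rfl hst
  · exact ⟨r, hr, hsr⟩

theorem ConnectedIn.adj_of_pair {a b : V} (h : G.ConnectedIn {a, b}) (hab : a ≠ b) : G.Adj a b := by
  obtain ⟨r, rfl | rfl, har⟩ := h.exists_adj (mem_insert a {b}) (mem_insert_of_mem a rfl) hab
  · exact absurd har (G.irrefl)
  · exact har

theorem reflTransGen_adjIn_of_insert {T : Set V} {s t w : V} (ht : t ∈ T)
    (hs : ∀ r ∈ G.componentIn T t, ¬G.Adj r s)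
    (h : ReflTransGen (G.AdjIn (insert s T)) t w) : ReflTransGen (G.AdjIn T) t w := by
  induction h with
  | refl => exact .refl
  | @tail p q _ hpq ih =>
    have hp : p ∈ G.componentIn T t := mem_componentIn_of_reflTransGen ⟨ht, .refl⟩ ih
    obtain rfl | hq := hpq.2.1
    · exact absurd hpq.2.2 (hs p hp)
    · exact ih.tail ⟨hp.1, hq, hpq.2.2⟩

theorem IsP4Free.compl (hG : G.IsP4Free) : Gᶜ.IsP4Free := by
  intro a b c d hab hbc hcd hac had hbd
  simp only [compl_adj, not_and, not_not] at hab hbc hcd hac had hbd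
  have hac' : a ≠ c := by rintro rfl; exact hcd.2 (had hcd.1)
  have had' : a ≠ d := by rintro rfl; exact hcd.2 (hac hcd.1.symm).symm
  have hbd' : b ≠ d := by rintro rfl; exact hab.2 (had hab.1)
  exact hG c a d b (hac hac').symm (had had') (hbd hbd').symm hcd.2 (fun h => hbc.2 h.symm) hab.2

theorem IsP4Free.connectedIn_of_insert (hG : G.IsP4Free) {T : Set V} {s : V} (hs : s ∉ T)
    (hS : G.ConnectedIn (insert s T)) (hSc : Gᶜ.ConnectedIn (insert s T)) : G.ConnectedIn T := by
  by_contra hT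
  obtain ⟨u, hu, v, hv, huv⟩ : ∃ u ∈ T, ∃ v ∈ T, ¬ReflTransGen (G.AdjIn T) u v := by
    simpa [ConnectedIn] using hT
  have hnbr : ∀ t ∈ T, ∃ r ∈ G.componentIn T t, G.Adj r s := by
    intro t ht
    by_contra! h
    have htu := reflTransGen_adjIn_of_insert ht h (hS t (.inr ht) u (.inr hu))
    have htv := reflTransGen_adjIn_of_insert ht h (hS t (.inr ht) v (.inr hv))
    exact huv ((_root_.symm htu).trans htv)
  obtain ⟨t, ht, hst⟩ : ∃ t ∈ T, ¬G.Adj s t := by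
    obtain ⟨t, ht, hst⟩ := hSc.exists_adj (mem_insert s T) (.inr hu) (ne_of_mem_of_not_mem hu hs).symm
    exact ⟨t, ht.resolve_left hst.ne.symm, hst.2⟩
  obtain ⟨r, ⟨-, htr⟩, hrs⟩ := hnbr t ht
  -- `w - s - q - p` will be an induced `P₄`, with `p - q` the edge of the component of `t`
  -- where adjacency to `s` switches on and `w` a neighbour of `s` in another component
  obtain ⟨p, q, htp, hpq, hsp, hsq⟩ :=
    htr.exists_boundary {w | ¬G.Adj s w} hst (by simpa using hrs.symm)
  have hp : p ∈ G.componentIn T t := mem_componentIn_of_reflTransGen ⟨ht, .refl⟩ htp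
  have hq : q ∈ G.componentIn T t := mem_componentIn_of_reflTransGen hp (.single hpq)
  obtain ⟨t', ht', ht't⟩ : ∃ t' ∈ T, t' ∉ G.componentIn T t := by
    by_contra! h
    exact huv ((_root_.symm (h u hu).2).trans (h v hv).2)
  obtain ⟨w, hw, hws⟩ := hnbr t' ht'
  have hfar : ∀ x ∈ G.componentIn T t, ¬G.Adj w x := fun x hx hwx =>
    ht't ⟨ht', (mem_componentIn_of_reflTransGen hx (.single ⟨hx.1, hw.1, hwx.symm⟩)).2.trans
      (_root_.symm hw.2)⟩
  exact hG w s q p hws (not_not.1 hsq) hpq.2.2.symm (hfar q hq) (hfar p hp) hsp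

/-- Seinsche's theorem. -/
theorem IsP4Free.subsingleton_of_connectedIn (hG : G.IsP4Free) {S : Set V} (hS : S.Finite)
    (hconn : G.ConnectedIn S) (hco : Gᶜ.ConnectedIn S) : S.Subsingleton := by
  induction S, hS using Set.Finite.induction_on with
  | empty => exact subsingleton_empty
  | @insert s T hs _ ih =>
    have hT := hG.connectedIn_of_insert hs hconn hco
    have hTc := hG.compl.connectedIn_of_insert hs hco (by rwa [compl_compl])
    obtain rfl | ⟨t, rfl⟩ := (ih hT hTc).eq_empty_or_singleton
    · simp
    · have hst : s ≠ t := hs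
      exact absurd (hconn.adj_of_pair hst) (hco.adj_of_pair hst).2

end SimpleGraph

open SimpleGraph

section GraphModules

variable {V : Type*} {E : V → V → Prop}

theorem IsGraphModule.inter {A B : Set V} (hA : IsGraphModule E A) (hB : IsGraphModule E B) :
    IsGraphModule E (A ∩ B) := by
  intro u hu v hv z hz
  by_cases hzA : z ∈ A
  · exact hB u hu.2 v hv.2 z fun hzB => hz ⟨hzA, hzB⟩
  · exact hA u hu.1 v hv.1 z hzA

/-- A module meeting `⋂₀ F` is comparable with each member of `F`. -/
theorem isStrongGraphModule_sInter {F : Set (Set V)} (hF : ∀ N ∈ F, IsStrongGraphModule E N)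
    (hne : (⋂₀ F).Nonempty) : IsStrongGraphModule E (⋂₀ F) := by
  refine ⟨⟨hne, fun u hu v hv z hz => ?_⟩, ?_⟩
  · obtain ⟨N, hN, hzN⟩ := not_forall₂.1 hz
    exact (hF N hN).1.2 u (hu N hN) v (hv N hN) z hzN
  · rintro N' hN' ⟨⟨w, hw, hwN'⟩, hsub, hsub'⟩
    by_cases h : ∀ N ∈ F, N' ⊆ N
    · exact hsub' (subset_sInter h)
    · obtain ⟨N, hN, hN'N⟩ := not_forall₂.1 h
      have hNN' : N ⊆ N' := by
        by_contra hNN'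
        exact (hF N hN).2 N' hN' ⟨⟨w, hw N hN, hwN'⟩, hNN', hN'N⟩
      exact hsub ((sInter_subset_of_mem hN).trans hNN')

theorem IsGraphModule.componentIn {G : SimpleGraph V} {M : Set V} (hM : IsGraphModule E M)
    (hG : ∀ p q z, p ≠ z → q ≠ z → G.Adj p q → ¬G.Adj p z → ¬G.Adj q z →
      (E p z ↔ E q z) ∧ (E z p ↔ E z q))
    (x : V) : IsGraphModule E (G.componentIn M x) := by
  intro u hu v hv z hz
  by_cases hzM : z ∈ M
  swap; · exact hM u hu.1 v hv.1 z hzM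
  have hfar : ∀ w ∈ G.componentIn M x, w ≠ z ∧ ¬G.Adj w z := fun w hw =>
    ⟨ne_of_mem_of_not_mem hw hz,
      fun hwz => hz (mem_componentIn_of_reflTransGen hw (.single ⟨hw.1, hzM, hwz⟩))⟩
  suffices ∀ w, ReflTransGen (G.AdjIn M) u w → (E u z ↔ E w z) ∧ (E z u ↔ E z w) from
    this v ((_root_.symm hu.2).trans hv.2)
  intro w huw
  induction huw with
  | refl => exact ⟨.rfl, .rfl⟩
  | @tail p q hup hpq ih =>
    have hp := mem_componentIn_of_reflTransGen hu hup
    have hq := mem_componentIn_of_reflTransGen hp (.single hpq)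
    have h := hG p q z (hfar p hp).1 (hfar q hq).1 hpq.2.2 (hfar p hp).2 (hfar q hq).2
    exact ⟨ih.1.trans h.1, ih.2.trans h.2⟩

theorem IsStrongGraphModule.componentIn {G : SimpleGraph V} {M : Set V}
    (hM : IsStrongGraphModule E M) {x : V} (hx : x ∈ M)
    (hK : IsGraphModule E (G.componentIn M x))
    (hG : ∀ a b c, a ≠ c → b ≠ c → (E a c ↔ E b c) → (E c a ↔ E c b) → G.Adj a c → G.Adj b c) :
    IsStrongGraphModule E (G.componentIn M x) := by
  refine ⟨⟨⟨x, hx, .refl⟩, hK⟩, ?_⟩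
  rintro N ⟨hNne, hN⟩ ⟨⟨a, haK, haN⟩, hKN, hNK⟩
  obtain ⟨c, hcK, hcN⟩ := not_subset.1 hKN
  by_cases hNM : N ∩ M ⊆ G.componentIn M x
  · exact hM.2 N ⟨hNne, hN⟩ ⟨⟨a, haK.1, haN⟩, fun h => hcN (h hcK.1),
      fun h => hNK fun w hw => hNM ⟨hw, h hw⟩⟩
  obtain ⟨b, ⟨hbN, hbM⟩, hbK⟩ := not_subset.1 hNM
  -- a path from `a ∈ N` to `c ∉ N` leaves `N` along an edge `p - q`; as `b, p` lie in the
  -- module `N ∩ M`, `b` is adjacent to `q` as well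
  obtain ⟨p, q, hap, hpq, hpN, hqN⟩ := ((_root_.symm haK.2).trans hcK.2).exists_boundary N haN hcN
  have hp := mem_componentIn_of_reflTransGen haK hap
  have hq := mem_componentIn_of_reflTransGen hp (.single hpq)
  have hbq := (hN.inter hM.1.2) p ⟨hpN, hpq.1⟩ b ⟨hbN, hbM⟩ q fun h => hqN h.1
  have hadj := hG p b q hpq.2.2.ne (ne_of_mem_of_not_mem hq hbK).symm hbq.1 hbq.2 hpq.2.2
  exact hbK (mem_componentIn_of_reflTransGen hq (.single ⟨hq.1, hbM, hadj.symm⟩))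

end GraphModules

section DiCographs

variable {V : Type*} {E : V → V → Prop}

theorem injective_triple {a b c : V} (hab : a ≠ b) (hac : a ≠ c) (hbc : b ≠ c) :
    Function.Injective ![a, b, c] := by
  intro k l hkl
  fin_cases k <;> fin_cases l <;> simp_all

theorem injective_quadruple {a b c d : V} (hab : a ≠ b) (hac : a ≠ c) (had : a ≠ d)
    (hbc : b ≠ c) (hbd : b ≠ d) (hcd : c ≠ d) : Function.Injective ![a, b, c, d] := by
  intro k l hkl
  fin_cases k <;> fin_cases l <;> simp_all

variable {u v w : V}

theorem IsDiCograph.symm_arcs_of_symm_arcs (hD : IsDiCograph E) (huv : u ≠ v) (huw : u ≠ w)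
    (hvw : v ≠ w) (hnuv : ¬E u v) (hnvu : ¬E v u) (hu : E u w ∧ E w u) (hv : E v w ∨ E w v) :
    E v w ∧ E w v := by
  by_contra h
  rcases hv with hv | hv
  · exact hD.2.1 ⟨![v, w, u], injective_triple hvw huv.symm huw.symm, by
      intro k l hkl; fin_cases k <;> fin_cases l <;> simp_all [FA, relOf, Fin.ext_iff]⟩
  · exact hD.2.2.1 ⟨![u, w, v], injective_triple huw huv hvw.symm, by
      intro k l hkl; fin_cases k <;> fin_cases l <;> simp_all [FB, relOf, Fin.ext_iff]⟩

theorem IsDiCograph.not_path_of_not_adj (hD : IsDiCograph E) (huv : u ≠ v) (huw : u ≠ w)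
    (hvw : v ≠ w) (hnuv : ¬E u v) (hnvu : ¬E v u) (huw' : E u w) (hwu : ¬E w u) (hwv : E w v) :
    E v w := by
  by_contra hvw'
  exact hD.1 ⟨![u, w, v], injective_triple huw huv hvw.symm, by
    intro k l hkl; fin_cases k <;> fin_cases l <;> simp_all [FD3, relOf, Fin.ext_iff]⟩

theorem IsDiCograph.arcs_iff_of_common_neighbor (hD : IsDiCograph E) (huv : u ≠ v)
    (huw : u ≠ w) (hvw : v ≠ w) (hnuv : ¬E u v) (hnvu : ¬E v u) (hu : E u w ∨ E w u)
    (hv : E v w ∨ E w v) : (E u w ↔ E v w) ∧ (E w u ↔ E w v) := by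
  by_cases hsu : E u w ∧ E w u
  · have := hD.symm_arcs_of_symm_arcs huv huw hvw hnuv hnvu hsu hv
    exact ⟨iff_of_true hsu.1 this.1, iff_of_true hsu.2 this.2⟩
  by_cases hsv : E v w ∧ E w v
  · have := hD.symm_arcs_of_symm_arcs huv.symm hvw huw hnvu hnuv hsv hu
    exact ⟨iff_of_true this.1 hsv.1, iff_of_true this.2 hsv.2⟩
  have h₁ := hD.not_path_of_not_adj huv huw hvw hnuv hnvu
  have h₂ := hD.not_path_of_not_adj huv.symm hvw huw hnvu hnuv
  by_cases E u w <;> by_cases E v w <;> simp_all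

theorem IsDiCograph.isP4Free (hD : IsDiCograph E) : (fromRel E).IsP4Free := by
  intro a b c d hab hbc hcd hac had hbd
  simp only [fromRel_adj, not_and, not_or] at *
  have hac' : a ≠ c := by rintro rfl; have := had hcd.1; tauto
  have had' : a ≠ d := by rintro rfl; have := hac hcd.1.symm; tauto
  have hbd' : b ≠ d := by rintro rfl; have := had hab.1; tauto
  obtain ⟨hac₁, hac₂⟩ := hac hac'
  obtain ⟨had₁, had₂⟩ := had had'
  obtain ⟨hbd₁, hbd₂⟩ := hbd hbd'
  have habc := hD.arcs_iff_of_common_neighbor hac' hab.1 hbc.1.symm hac₁ hac₂ hab.2 hbc.2.symm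
  have hbcd := hD.arcs_iff_of_common_neighbor hbd' hbc.1 hcd.1.symm hbd₁ hbd₂ hbc.2 hcd.2.symm
  have hinj := injective_quadruple hab.1 hac' had' hbc.1 hbd' hcd.1
  by_cases h₁ : E a b <;> by_cases h₂ : E b a
  · exact hD.2.2.2.2.2.2.2 ⟨![a, b, c, d], hinj, by
      intro k l hkl; fin_cases k <;> fin_cases l <;> simp_all [FP4, relOf, Fin.ext_iff]⟩
  · exact hD.2.2.2.2.2.2.1 ⟨![d, c, b, a],
      injective_quadruple hcd.1.symm hbd'.symm had'.symm hbc.1.symm hac'.symm hab.1.symm, by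
      intro k l hkl; fin_cases k <;> fin_cases l <;> simp_all [FN, relOf, Fin.ext_iff]⟩
  · exact hD.2.2.2.2.2.2.1 ⟨![a, b, c, d], hinj, by
      intro k l hkl; fin_cases k <;> fin_cases l <;> simp_all [FN, relOf, Fin.ext_iff]⟩
  · exact hab.2.elim h₁ h₂

end DiCographs

section Clusters

variable {V : Type*} {E : V → V → Prop}

theorem SimpleGraph.ConnectedIn.connectedOn {M : Set V} (h : (fromRel E).ConnectedIn M) :
    ConnectedOn E M :=
  fun x hx y hy => ReflTransGen.mono (fun _ _ ⟨ha, hb, hab⟩ => ⟨ha, hb, hab.2⟩) _ _ (h x hx y hy)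

theorem IsStrongGraphModule.componentIn_fromRel {M : Set V} (hM : IsStrongGraphModule E M)
    {x : V} (hx : x ∈ M) : IsStrongGraphModule E ((fromRel E).componentIn M x) := by
  refine hM.componentIn hx (hM.1.2.componentIn (fun p q z hpz hqz _ hp hq => ?_) x) ?_
  · simp only [fromRel_adj, not_and, not_or] at hp hq
    simp [hp hpz, hq hqz]
  · intro a b c _ hbc hac hca
    simp only [fromRel_adj, hac, hca]
    exact fun h => ⟨hbc, h.2⟩

theorem IsStrongGraphModule.componentIn_compl_fromRel (hD : IsDiCograph E) {M : Set V}
    (hM : IsStrongGraphModule E M) {x : V} (hx : x ∈ M) :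
    IsStrongGraphModule E ((fromRel E)ᶜ.componentIn M x) := by
  refine hM.componentIn hx (hM.1.2.componentIn (fun p q z hpz hqz hpq hp hq => ?_) x) ?_
  · rw [compl_adj, fromRel_adj, not_and, not_or] at hpq
    rw [compl_adj, fromRel_adj, not_and, not_not] at hp hq
    obtain ⟨hpq, hn⟩ := hpq
    exact hD.arcs_iff_of_common_neighbor hpq hpz hqz (hn hpq).1 (hn hpq).2 (hp hpz).2 (hq hqz).2
  · intro a b c _ hbc hac hca
    simp only [compl_adj, fromRel_adj, hac, hca]
    exact fun h => ⟨hbc, fun h' => h.2 ⟨h.1, h'.2⟩⟩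

theorem IsDiCograph.exists_isOneCluster [Finite V] (hD : IsDiCograph E) {x y z : V}
    (hxy : x ≠ y) (hxz : x ≠ z) (hyz : y ≠ z) (hE : E x y) (hzx : ¬E x z ∧ ¬E z x)
    (hzy : ¬E y z ∧ ¬E z y) : ∃ M, IsOneCluster E M ∧ x ∈ M ∧ y ∈ M ∧ z ∉ M := by
  set M := ⋂₀ {N | IsStrongGraphModule E N ∧ x ∈ N ∧ y ∈ N}
  have hxM : x ∈ M := mem_sInter.2 fun _ hN => hN.2.1
  have hyM : y ∈ M := mem_sInter.2 fun _ hN => hN.2.2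
  have hM : IsStrongGraphModule E M := isStrongGraphModule_sInter (fun _ hN => hN.1) ⟨x, hxM⟩
  have hmin : ∀ N, IsStrongGraphModule E N → x ∈ N → y ∈ N → M ⊆ N :=
    fun _ hN hxN hyN => sInter_subset_of_mem ⟨hN, hxN, hyN⟩
  have hconn : (fromRel E).ConnectedIn M := connectedIn_of_subset_componentIn <|
    hmin _ (hM.componentIn_fromRel hxM) ⟨hxM, .refl⟩
      ⟨hyM, .single ⟨hxM, hyM, (fromRel_adj E x y).2 ⟨hxy, .inl hE⟩⟩⟩
  refine ⟨M, ⟨hM, ?_, hconn.connectedOn⟩, hxM, hyM, fun hzM => ?_⟩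
  · exact (ncard_pair hxy).symm.le.trans (ncard_le_ncard (pair_subset hxM hyM))
  have hco : (fromRel E)ᶜ.ConnectedIn M := connectedIn_of_subset_componentIn <|
    hmin _ (hM.componentIn_compl_fromRel hD hzM)
      ⟨hxM, .single ⟨hzM, hxM, (compl_adj _ z x).2 ⟨hxz.symm, by simp [fromRel_adj, hzx]⟩⟩⟩
      ⟨hyM, .single ⟨hzM, hyM, (compl_adj _ z y).2 ⟨hyz.symm, by simp [fromRel_adj, hzy]⟩⟩⟩
  exact hxy (hD.isP4Free.subsingleton_of_connectedIn M.toFinite hconn hco hxM hyM)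

end Clusters

section TwoStructures

variable {V Υ : Type*} {φ : V → V → Υ}

theorem Dset_comm (φ : V → V → Υ) (u v : V) : Dset φ u v = Dset φ v u :=
  pair_comm _ _

theorem Reversible.Dset_eq (hrev : Reversible φ) {a b c d : V} (hab : a ≠ b) (hcd : c ≠ d)
    (h : φ a b = φ c d) : Dset φ a b = Dset φ c d := by
  simp [Dset, h, hrev a b c d hab hcd h]

theorem Reversible.not_ggraph_of_Dset_ne (hrev : Reversible φ) {u v x y : V} (hxy : x ≠ y)
    (h : Dset φ u v ≠ Dset φ x y) :
    ¬Ggraph φ (φ x y) u v ∧ ¬Ggraph φ (φ x y) v u :=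
  ⟨fun ⟨huv, he⟩ => h (hrev.Dset_eq huv hxy he),
    fun ⟨hvu, he⟩ => h (Dset_comm φ u v ▸ hrev.Dset_eq hvu hxy he)⟩

theorem Reversible.exists_isOneCluster [Finite V] (hrev : Reversible φ) (hU1 : CondU1 φ)
    {x y z : V} (hxy : x ≠ y) (hxz : x ≠ z) (hyz : y ≠ z) (hx : Dset φ x z ≠ Dset φ x y)
    (hy : Dset φ y z ≠ Dset φ x y) :
    ∃ M, IsOneCluster (Ggraph φ (φ x y)) M ∧ x ∈ M ∧ y ∈ M ∧ z ∉ M :=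
  (hU1 _).exists_isOneCluster hxy hxz hyz ⟨hxy, rfl⟩ (hrev.not_ggraph_of_Dset_ne hxy hx)
    (hrev.not_ggraph_of_Dset_ne hxy hy)

end TwoStructures

theorem pairwise_ne_of_two_lt_ncard {α : Type*} {a b c : α}
    (h : 2 < ({a, b, c} : Set α).ncard) : a ≠ b ∧ a ≠ c ∧ b ≠ c := by
  have hpair : ∀ x y : α, ({x, y} : Set α).ncard ≤ 2 := fun x y =>
    (ncard_insert_le x {y}).trans (by simp)
  refine ⟨?_, ?_, ?_⟩ <;> rintro rfl
  · exact (hpair a c).not_gt (by simpa using h)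
  · exact (hpair b a).not_gt (by simpa [insert_comm] using h)
  · exact (hpair a b).not_gt (by simpa using h)

/-- If a reversible 2-structure satisfies (U1) but violates (U2), then the
collection `C¹(g)` of 1-clusters is not a hierarchy: it contains two
overlapping clusters. -/
theorem not_U2_overlapping_clusters {V Υ : Type*} [Fintype V]
    (φ : V → V → Υ) (hrev : Reversible φ) (hU1 : CondU1 φ)
    (hU2 : ¬ CondU2 φ) :
    ∃ M ∈ OneClusters φ, ∃ N ∈ OneClusters φ, Overlap M N := by
  simp only [CondU2, not_forall, not_le] at hU2
  obtain ⟨x, y, z, hxy, hxz, hyz, hcard⟩ := hU2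
  obtain ⟨hxy_xz, hxy_yz, hxz_yz⟩ := pairwise_ne_of_two_lt_ncard hcard
  obtain ⟨M, hM, hxM, hyM, hzM⟩ :=
    hrev.exists_isOneCluster hU1 hxy hxz hyz hxy_xz.symm hxy_yz.symm
  obtain ⟨N, hN, hxN, hzN, hyN⟩ :=
    hrev.exists_isOneCluster hU1 hxz hxy hyz.symm hxy_xz (Dset_comm φ z y ▸ hxz_yz.symm)
  exact ⟨M, .inl ⟨_, hM⟩, N, .inl ⟨_, hN⟩, ⟨x, hxM, hxN⟩, fun h => hyN (h hyM),
    fun h => hzM (h hzN)⟩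
end
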